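/- Let m ≥ 3 be an odd integer and let Ŵ⁺ be the group with presentation ⟨z, s₀, s₁, s_m | z² = s₀² = s₁² = s_m² = (s₁s_m)^m = 1, (s₀s₁)² = (s₀s_m)² = z, z s_i = s_i z for i ∈ {0,1,m}⟩. Then Ŵ⁺ has exactly 2m + 3 conjugacy classes. -/

import Mathlib

/-!
Write `r = s₁ s_m`. The relations make `z` central, `r` of order dividing `m`, `s₀` commute with
`r`, `s₁` invert `r`, and `s₁ s₀ = z s₀ s₁`; hence the words `z^a s₀^b r^c s₁^e` (`a, b, e` mod 2,
`c` mod `m`) are closed under right multiplication by generators and exhaust `Ŵ⁺`. Conversely they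
multiply as a group of order `8m` in which the relations hold, so `Ŵ⁺` is that group. Its classes:
* `e = 1`: conjugating by `r^k` changes `c` by `2k`, which for odd `m` is any amount; so the class
  depends only on `b` (2 classes);
* `e = 0`, `b = 1`: classified by `(-1)^a c` (`m` classes);
* `e = 0`, `b = 0`: classified by `a` and `c` up to sign (`2 · (m + 1) / 2` classes).
-/

/-- Generators of the double covering of `W = ℤ₂ × D_{2m}`: the central element `z`
and the lifted reflections `s₀`, `s₁`, `s_m`. -/
inductive Gen : Type
  | z | s0 | s1 | sm
deriving DecidableEq

open FreeGroup

/-- Relators of the positive double covering `Ŵ⁺` of `ℤ₂ × D_{2m}` for odd `m`: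
`z² = s₀² = s₁² = s_m² = (s₁s_m)^m = 1`, `(s₀s₁)² = (s₀s_m)² = z`,
and `z` commutes with the generators. -/
def relsOddPos (m : ℕ) : Set (FreeGroup Gen) :=
  { (of Gen.z) ^ 2, (of Gen.s0) ^ 2, (of Gen.s1) ^ 2, (of Gen.sm) ^ 2,
    (of Gen.s1 * of Gen.sm) ^ m,
    (of Gen.s0 * of Gen.s1) ^ 2 * (of Gen.z)⁻¹,
    (of Gen.s0 * of Gen.sm) ^ 2 * (of Gen.z)⁻¹,
    of Gen.z * of Gen.s0 * (of Gen.z)⁻¹ * (of Gen.s0)⁻¹,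
    of Gen.z * of Gen.s1 * (of Gen.z)⁻¹ * (of Gen.s1)⁻¹,
    of Gen.z * of Gen.sm * (of Gen.z)⁻¹ * (of Gen.sm)⁻¹ }

section PowZModVal

variable {n : ℕ}

theorem pow_zmod_val_one {M : Type*} [Monoid M] {g : M} (hg : g ^ n = 1) :
    g ^ (1 : ZMod n).val = g := by
  rw [ZMod.val_one_eq_one_mod, ← pow_eq_pow_mod 1 hg, pow_one]

theorem pow_zmod_val_add {M : Type*} [Monoid M] {g : M} [NeZero n] (hg : g ^ n = 1)
    (a b : ZMod n) : g ^ (a + b).val = g ^ a.val * g ^ b.val := by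
  rw [ZMod.val_add, ← pow_eq_pow_mod _ hg, pow_add]

theorem pow_zmod_val_neg {G : Type*} [Group G] {g : G} [NeZero n] (hg : g ^ n = 1) (a : ZMod n) :
    g ^ (-a).val = (g ^ a.val)⁻¹ :=
  eq_inv_of_mul_eq_one_left <| by
    rw [← pow_zmod_val_add hg, neg_add_cancel, ZMod.val_zero, pow_zero]

end PowZModVal

theorem zmod_two_eq_zero_or_one (e : ZMod 2) : e = 0 ∨ e = 1 := by decide +revert

section NegOnePow

variable {R : Type*} [Monoid R] [HasDistribNeg R]

theorem neg_one_pow_zmod_two_val_add (e e' : ZMod 2) :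
    (-1 : R) ^ (e + e').val = (-1) ^ e.val * (-1) ^ e'.val :=
  pow_zmod_val_add (neg_one_sq) e e'

theorem neg_one_pow_mul_self (k : ℕ) : (-1 : R) ^ k * (-1) ^ k = 1 := by
  rw [← pow_add, ← two_mul, pow_mul, neg_one_sq, one_pow]

end NegOnePow

theorem mul_rev_eq_of_sq_eq_one {G : Type*} [Group G] {a b c : G} (ha : a ^ 2 = 1)
    (hb : b ^ 2 = 1) (hab : (a * b) ^ 2 = c) : b * a = a * c * b :=
  calc b * a = a⁻¹ * (a * b) ^ 2 * b⁻¹ := by rw [sq]; group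
    _ = a * c * b := by
      rw [hab, inv_eq_of_mul_eq_one_right (sq a ▸ ha), inv_eq_of_mul_eq_one_right (sq b ▸ hb)]

theorem MulEquiv.card_conjClasses_eq {G H : Type*} [Group G] [Group H] (φ : G ≃* H) :
    Nat.card (ConjClasses G) = Nat.card (ConjClasses H) :=
  Nat.card_congr <| Quotient.congr φ.toEquiv fun a b =>
    show IsConj a b ↔ IsConj (φ a) (φ b) from ⟨φ.toMonoidHom.map_isConj, fun h => by
      simpa only [MulEquiv.coe_toMonoidHom, MulEquiv.symm_apply_apply] using
        φ.symm.toMonoidHom.map_isConj h⟩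

def conjClassesEquivOfInvariant {G ι : Type*} [Group G] (F : G → ι) (rep : ι → G)
    (hF : ∀ g x, F (g * x * g⁻¹) = F x) (hF_rep : ∀ i, F (rep i) = i)
    (hrep : ∀ x, IsConj x (rep (F x))) : ConjClasses G ≃ ι where
  toFun := Quotient.lift F fun x y (h : IsConj x y) => by
    obtain ⟨g, rfl⟩ := isConj_iff.1 h
    exact (hF g x).symm
  invFun i := ConjClasses.mk (rep i)
  left_inv := by
    rintro ⟨x⟩
    exact ConjClasses.mk_eq_mk_iff_isConj.2 (hrep x).symm
  right_inv := hF_rep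

/-- `⟨a, b, c, e⟩` stands for `z ^ a * s₀ ^ b * (s₁ * s_m) ^ c * s₁ ^ e`. -/
@[ext] structure WposModel (m : ℕ) where
  a : ZMod 2
  b : ZMod 2
  c : ZMod m
  e : ZMod 2

namespace WposModel

variable {m : ℕ}

instance : Mul (WposModel m) :=
  ⟨fun x y => ⟨x.a + y.a + x.e * y.b, x.b + y.b, x.c + (-1) ^ x.e.val * y.c, x.e + y.e⟩⟩

instance : One (WposModel m) := ⟨⟨0, 0, 0, 0⟩⟩

instance : Inv (WposModel m) := ⟨fun x => ⟨x.a + x.e * x.b, x.b, -((-1) ^ x.e.val * x.c), x.e⟩⟩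

@[simp] theorem mul_a (x y : WposModel m) : (x * y).a = x.a + y.a + x.e * y.b := rfl
@[simp] theorem mul_b (x y : WposModel m) : (x * y).b = x.b + y.b := rfl
@[simp] theorem mul_c (x y : WposModel m) : (x * y).c = x.c + (-1) ^ x.e.val * y.c := rfl
@[simp] theorem mul_e (x y : WposModel m) : (x * y).e = x.e + y.e := rfl
@[simp] theorem one_a : (1 : WposModel m).a = 0 := rfl
@[simp] theorem one_b : (1 : WposModel m).b = 0 := rfl
@[simp] theorem one_c : (1 : WposModel m).c = 0 := rfl
@[simp] theorem one_e : (1 : WposModel m).e = 0 := rfl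
@[simp] theorem inv_a (x : WposModel m) : x⁻¹.a = x.a + x.e * x.b := rfl
@[simp] theorem inv_b (x : WposModel m) : x⁻¹.b = x.b := rfl
@[simp] theorem inv_c (x : WposModel m) : x⁻¹.c = -((-1) ^ x.e.val * x.c) := rfl
@[simp] theorem inv_e (x : WposModel m) : x⁻¹.e = x.e := rfl

instance : Group (WposModel m) := Group.ofLeftAxioms
  (fun x y z => by ext <;> simp [neg_one_pow_zmod_two_val_add] <;> ring)
  (fun x => by ext <;> simp)
  (fun x => by ext <;> simp <;> grind)

theorem conj_eq (g x : WposModel m) :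
    g * x * g⁻¹ = ⟨x.a + g.e * x.b + x.e * g.b, x.b,
      (-1) ^ g.e.val * x.c + (1 - (-1 : ZMod m) ^ x.e.val) * g.c, x.e⟩ := by
  ext
  · simp only [mul_a, inv_a, inv_b, mul_e]; grind
  · simp only [mul_b, inv_b]; grind
  · simp only [mul_c, inv_c, mul_e, neg_one_pow_zmod_two_val_add]
    linear_combination (-(-1) ^ x.e.val * g.c) * neg_one_pow_mul_self (R := ZMod m) g.e.val
  · simp only [mul_e, inv_e]; grind

theorem pow_mk_e_zero (a b : ZMod 2) (c : ZMod m) (k : ℕ) :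
    (⟨a, b, c, 0⟩ : WposModel m) ^ k = ⟨k • a, k • b, k • c, 0⟩ := by
  induction k with
  | zero => exact (pow_zero _).trans (by ext <;> simp)
  | succ k ih => rw [pow_succ, ih]; ext <;> simp <;> ring

abbrev ClassInvariant (m : ℕ) : Type := ZMod 2 ⊕ (ZMod 2 × Fin (m / 2 + 1)) ⊕ ZMod m

variable [NeZero m]

def classInvariant (x : WposModel m) : ClassInvariant m :=
  if x.e = 1 then .inl x.b
  else if x.b = 1 then .inr (.inr ((-1) ^ x.a.val * x.c))
  else .inr (.inl (x.a, ⟨x.c.valMinAbs.natAbs, Nat.lt_succ_of_le x.c.natAbs_valMinAbs_le⟩))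

def classRep : ClassInvariant m → WposModel m
  | .inl b => ⟨0, b, 0, 1⟩
  | .inr (.inl (a, j)) => ⟨a, 0, (j : ℕ), 0⟩
  | .inr (.inr c) => ⟨0, 1, c, 0⟩

theorem classInvariant_classRep (i : ClassInvariant m) : classInvariant (classRep i) = i := by
  rcases i with b | ⟨a, j⟩ | c
  · simp [classInvariant, classRep]
  · have hj : ((j : ℕ) : ZMod m).valMinAbs = j :=
      ZMod.valMinAbs_natCast_of_le_half (Nat.le_of_lt_succ j.isLt)
    simp [classInvariant, classRep, hj]
  · simp [classInvariant, classRep]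

theorem classInvariant_conj (g x : WposModel m) :
    classInvariant (g * x * g⁻¹) = classInvariant x := by
  rw [conj_eq]
  rcases zmod_two_eq_zero_or_one x.e with he | he
  · rcases zmod_two_eq_zero_or_one x.b with hb | hb
    · rcases zmod_two_eq_zero_or_one g.e with hg | hg <;>
        simp [classInvariant, he, hb, hg, ZMod.val_one]
    · simp only [classInvariant, he, hb, neg_one_pow_zmod_two_val_add, zero_ne_one, ↓reduceIte,
        mul_one, zero_mul, ZMod.val_zero, pow_zero, sub_self, add_zero, Sum.inr.injEq]
      linear_combination
        (-1 : ZMod m) ^ x.a.val * x.c * neg_one_pow_mul_self (R := ZMod m) g.e.val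
  · simp [classInvariant, he]

theorem isConj_classRep (hodd : Odd m) (x : WposModel m) :
    IsConj x (classRep (classInvariant x)) := by
  rw [isConj_iff]
  rcases zmod_two_eq_zero_or_one x.e with he | he
  · rcases zmod_two_eq_zero_or_one x.b with hb | hb
    · have hrep : classRep (classInvariant x) =
          ⟨x.a, 0, if x.c.val ≤ m / 2 then x.c else -x.c, 0⟩ := by
        simp only [classInvariant, classRep, he, hb, zero_ne_one, if_false]
        rw [ZMod.natCast_natAbs_valMinAbs]
      rw [hrep]
      split_ifs
      · exact ⟨1, by rw [conj_eq]; ext <;> simp [he, hb]⟩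
      · exact ⟨⟨0, 0, 0, 1⟩, by rw [conj_eq]; ext <;> simp [he, hb, ZMod.val_one]⟩
    · refine ⟨⟨0, 0, 0, x.a⟩, ?_⟩
      rw [conj_eq]
      ext <;> simp [classInvariant, classRep, he, hb, CharTwo.add_self_eq_zero]
  · have h2 : IsUnit (2 : ZMod m) := by
      exact_mod_cast (ZMod.isUnit_iff_coprime 2 m).2 (Nat.coprime_two_left.2 hodd)
    obtain ⟨k, hk⟩ := Even.of_isUnit_two h2 x.c
    have hrep : classRep (classInvariant x) = ⟨0, x.b, 0, 1⟩ := by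
      simp [classInvariant, classRep, he]
    refine ⟨⟨0, x.a, -k, 0⟩, ?_⟩
    rw [hrep, conj_eq]
    ext <;> simp [he, hk, ZMod.val_one, CharTwo.add_self_eq_zero, one_add_one_eq_two, two_mul]

theorem card_conjClasses (hodd : Odd m) : Nat.card (ConjClasses (WposModel m)) = 2 * m + 3 := by
  rw [Nat.card_congr (conjClassesEquivOfInvariant classInvariant classRep classInvariant_conj
    classInvariant_classRep (isConj_classRep hodd))]
  simp only [Nat.card_eq_fintype_card, Fintype.card_sum, Fintype.card_prod, ZMod.card,
    Fintype.card_fin]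
  have := Nat.odd_iff.1 hodd
  omega

end WposModel

namespace WposPresentation

variable {m : ℕ}

local notation "P" => PresentedGroup (relsOddPos m)

def z : P := PresentedGroup.of Gen.z
def s₀ : P := PresentedGroup.of Gen.s0
def s₁ : P := PresentedGroup.of Gen.s1
def sₘ : P := PresentedGroup.of Gen.sm
def r : P := s₁ * sₘ

theorem z_sq : (z : P) ^ 2 = 1 := by
  have h := PresentedGroup.one_of_mem (rels := relsOddPos m) (x := of Gen.z ^ 2)
    (by simp [relsOddPos])
  rwa [map_pow] at h

theorem s₀_sq : (s₀ : P) ^ 2 = 1 := by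
  have h := PresentedGroup.one_of_mem (rels := relsOddPos m) (x := of Gen.s0 ^ 2)
    (by simp [relsOddPos])
  rwa [map_pow] at h

theorem s₁_sq : (s₁ : P) ^ 2 = 1 := by
  have h := PresentedGroup.one_of_mem (rels := relsOddPos m) (x := of Gen.s1 ^ 2)
    (by simp [relsOddPos])
  rwa [map_pow] at h

theorem sₘ_sq : (sₘ : P) ^ 2 = 1 := by
  have h := PresentedGroup.one_of_mem (rels := relsOddPos m) (x := of Gen.sm ^ 2)
    (by simp [relsOddPos])
  rwa [map_pow] at h

theorem r_pow : (r : P) ^ m = 1 := by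
  have h := PresentedGroup.one_of_mem (rels := relsOddPos m) (x := (of Gen.s1 * of Gen.sm) ^ m)
    (by simp [relsOddPos])
  rwa [map_pow, _root_.map_mul] at h

theorem s₀_mul_s₁_sq : ((s₀ : P) * s₁) ^ 2 = z := by
  have h := PresentedGroup.mk_eq_mk_of_mul_inv_mem (rels := relsOddPos m)
    (x := (of Gen.s0 * of Gen.s1) ^ 2) (y := of Gen.z) (by simp [relsOddPos])
  rwa [map_pow, _root_.map_mul] at h

theorem s₀_mul_sₘ_sq : ((s₀ : P) * sₘ) ^ 2 = z := by
  have h := PresentedGroup.mk_eq_mk_of_mul_inv_mem (rels := relsOddPos m)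
    (x := (of Gen.s0 * of Gen.sm) ^ 2) (y := of Gen.z) (by simp [relsOddPos])
  rwa [map_pow, _root_.map_mul] at h

theorem z_mul_of {g : Gen} (hg : g ≠ Gen.z) :
    (z : P) * PresentedGroup.of g = PresentedGroup.of g * z := by
  have h := PresentedGroup.mk_eq_mk_of_mul_inv_mem (rels := relsOddPos m)
    (x := of Gen.z * of g) (y := of g * of Gen.z)
    (by rw [mul_inv_rev, ← mul_assoc]; cases g <;> simp_all [relsOddPos])
  rwa [_root_.map_mul, _root_.map_mul] at h

theorem commute_z (y : P) : Commute z y := by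
  have h : Subgroup.closure (Set.range PresentedGroup.of) ≤ Subgroup.centralizer {(z : P)} := by
    rw [Subgroup.closure_le]
    rintro _ ⟨g, rfl⟩
    rw [SetLike.mem_coe, Subgroup.mem_centralizer_singleton_iff]
    rcases eq_or_ne g Gen.z with rfl | hg
    · rfl
    · exact (z_mul_of hg).symm
  exact (Subgroup.mem_centralizer_singleton_iff.1 (h (by simp))).symm

theorem of_inv (g : Gen) : (PresentedGroup.of g : P)⁻¹ = PresentedGroup.of g := by
  apply inv_eq_of_mul_eq_one_right
  rw [← sq]
  cases g
  exacts [z_sq, s₀_sq, s₁_sq, sₘ_sq]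

theorem s₁_mul_s₀ : (s₁ : P) * s₀ = z * s₀ * s₁ := by
  rw [mul_rev_eq_of_sq_eq_one s₀_sq s₁_sq s₀_mul_s₁_sq, (commute_z s₀).eq]

theorem sₘ_mul_s₀ : (sₘ : P) * s₀ = z * s₀ * sₘ := by
  rw [mul_rev_eq_of_sq_eq_one s₀_sq sₘ_sq s₀_mul_sₘ_sq, (commute_z s₀).eq]

theorem commute_s₀_r : Commute (s₀ : P) r := by
  have hz : (z : P) * z = 1 := by rw [← sq, z_sq]
  symm
  calc (r : P) * s₀ = s₁ * (sₘ * s₀) := mul_assoc _ _ _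
    _ = z * (s₁ * s₀) * sₘ := by
      rw [sₘ_mul_s₀, ← mul_assoc, ← mul_assoc, ← (commute_z s₁).eq, mul_assoc z]
    _ = s₀ * r := by rw [s₁_mul_s₀, ← mul_assoc, ← mul_assoc, hz, one_mul, r, mul_assoc]

theorem s₁_mul_r : (s₁ : P) * r = r⁻¹ * s₁ := by
  have h₁ : (s₁ : P) * s₁ = 1 := by rw [← sq, s₁_sq]
  rw [r, mul_inv_rev, ← mul_assoc, h₁, one_mul, sₘ, of_inv, inv_mul_cancel_right]

theorem sₘ_eq : (sₘ : P) = s₁ * r := by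
  rw [r, ← mul_assoc, ← sq, s₁_sq, one_mul]

theorem s₁_pow_mul_s₀ (e : ZMod 2) : (s₁ : P) ^ e.val * s₀ = z ^ e.val * s₀ * s₁ ^ e.val := by
  rcases zmod_two_eq_zero_or_one e with rfl | rfl
  · simp
  · simp [ZMod.val_one, s₁_mul_s₀]

theorem s₁_pow_mul_r [NeZero m] (e : ZMod 2) :
    (s₁ : P) ^ e.val * r = r ^ ((-1 : ZMod m) ^ e.val).val * s₁ ^ e.val := by
  rcases zmod_two_eq_zero_or_one e with rfl | rfl
  · simp [pow_zmod_val_one r_pow]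
  · simp [ZMod.val_one, pow_zmod_val_neg r_pow, pow_zmod_val_one r_pow, s₁_mul_r]

def normalForm (x : WposModel m) : P := z ^ x.a.val * s₀ ^ x.b.val * r ^ x.c.val * s₁ ^ x.e.val

theorem normalForm_mul_z (x : WposModel m) :
    normalForm (x * ⟨1, 0, 0, 0⟩) = normalForm x * z := by
  have hx : x * ⟨1, 0, 0, 0⟩ = ⟨x.a + 1, x.b, x.c, x.e⟩ := by ext <;> simp
  simp only [normalForm, hx, pow_zmod_val_add z_sq, pow_zmod_val_one z_sq, mul_assoc,
    (commute_z _).eq]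

theorem normalForm_mul_s₁ (x : WposModel m) :
    normalForm (x * ⟨0, 0, 0, 1⟩) = normalForm x * s₁ := by
  have hx : x * ⟨0, 0, 0, 1⟩ = ⟨x.a, x.b, x.c, x.e + 1⟩ := by ext <;> simp
  simp only [normalForm, hx, pow_zmod_val_add s₁_sq, pow_zmod_val_one s₁_sq, mul_assoc]

theorem normalForm_mul_s₀ (x : WposModel m) :
    normalForm (x * ⟨0, 1, 0, 0⟩) = normalForm x * s₀ := by
  have hx : x * ⟨0, 1, 0, 0⟩ = ⟨x.a + x.e, x.b + 1, x.c, x.e⟩ := by ext <;> simp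
  simp only [normalForm, hx, pow_zmod_val_add z_sq, pow_zmod_val_add s₀_sq,
    pow_zmod_val_one s₀_sq, mul_assoc, s₁_pow_mul_s₀]
  congr 1
  have hz (y : P) : Commute (z ^ x.e.val) y := (commute_z y).pow_left _
  rw [(commute_s₀_r.pow_right _).left_comm, (hz _).left_comm, (hz _).left_comm]

theorem normalForm_mul_r [NeZero m] (x : WposModel m) :
    normalForm (x * ⟨0, 0, 1, 0⟩) = normalForm x * r := by
  have hx : x * ⟨0, 0, 1, 0⟩ = ⟨x.a, x.b, x.c + (-1) ^ x.e.val, x.e⟩ := by ext <;> simp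
  simp only [normalForm, hx, pow_zmod_val_add r_pow, mul_assoc, s₁_pow_mul_r]

def genImage : Gen → WposModel m
  | .z => ⟨1, 0, 0, 0⟩
  | .s0 => ⟨0, 1, 0, 0⟩
  | .s1 => ⟨0, 0, 0, 1⟩
  | .sm => ⟨0, 0, -1, 1⟩

theorem genImage_s1_mul_sm : genImage (m := m) .s1 * genImage .sm = ⟨0, 0, 1, 0⟩ := by
  ext <;> simp [genImage, ZMod.val_one, CharTwo.add_self_eq_zero]

theorem genImage_rels : ∀ w ∈ relsOddPos m, FreeGroup.lift (genImage (m := m)) w = 1 := by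
  simp only [relsOddPos, Set.mem_insert_iff, Set.mem_singleton_iff]
  rintro w (rfl | rfl | rfl | rfl | rfl | rfl | rfl | rfl | rfl | rfl) <;>
    simp only [map_pow, _root_.map_mul, _root_.map_inv, FreeGroup.lift_apply_of,
      genImage_s1_mul_sm]
  case inr.inr.inr.inr.inl => rw [WposModel.pow_mk_e_zero]; ext <;> simp
  all_goals ext <;> simp [sq, genImage, ZMod.val_one, CharTwo.add_self_eq_zero]

def toModel (m : ℕ) : PresentedGroup (relsOddPos m) →* WposModel m :=
  PresentedGroup.toGroup genImage_rels

theorem toModel_of (g : Gen) : toModel m (PresentedGroup.of g) = genImage g :=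
  PresentedGroup.toGroup.of _

theorem normalForm_mul_genImage [NeZero m] (x : WposModel m) (g : Gen) :
    normalForm (x * genImage g) = normalForm x * PresentedGroup.of g := by
  cases g
  · exact normalForm_mul_z x
  · exact normalForm_mul_s₀ x
  · exact normalForm_mul_s₁ x
  · have h : genImage (m := m) .sm = ⟨0, 0, 0, 1⟩ * ⟨0, 0, 1, 0⟩ := by
      ext <;> simp [genImage, ZMod.val_one]
    rw [h, ← mul_assoc, normalForm_mul_r, normalForm_mul_s₁, mul_assoc, ← sₘ_eq]
    rfl

theorem normalForm_surjective [NeZero m] :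
    Function.Surjective (normalForm : WposModel m → P) := by
  intro y
  have hy : y ∈ Subgroup.closure (Set.range PresentedGroup.of) := by simp
  induction hy using Subgroup.closure_induction_right with
  | one => exact ⟨1, by simp [normalForm]⟩
  | mul_right y _ _ hg ih =>
    obtain ⟨g, rfl⟩ := hg
    obtain ⟨x, rfl⟩ := ih
    exact ⟨x * genImage g, normalForm_mul_genImage x g⟩
  | mul_inv_cancel y _ _ hg ih =>
    obtain ⟨g, rfl⟩ := hg
    obtain ⟨x, rfl⟩ := ih
    exact ⟨x * genImage g, by rw [of_inv, normalForm_mul_genImage]⟩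

theorem toModel_normalForm [NeZero m] (x : WposModel m) : toModel m (normalForm x) = x := by
  have hs (e : ZMod 2) : (⟨0, 0, 0, 1⟩ : WposModel m) ^ e.val = ⟨0, 0, 0, e⟩ := by
    rcases zmod_two_eq_zero_or_one e with rfl | rfl
    · exact (pow_zero _).trans rfl
    · simp [ZMod.val_one]
  have hr : toModel m r = ⟨0, 0, 1, 0⟩ := by
    rw [r, _root_.map_mul, s₁, sₘ, toModel_of, toModel_of, genImage_s1_mul_sm]
  simp only [normalForm, _root_.map_mul, map_pow, hr]
  simp only [z, s₀, s₁, toModel_of, genImage, WposModel.pow_mk_e_zero, hs]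
  ext <;> simp

theorem toModel_bijective [NeZero m] : Function.Bijective (toModel m) := by
  refine ⟨fun y₁ y₂ h => ?_, fun x => ⟨normalForm x, toModel_normalForm x⟩⟩
  obtain ⟨x₁, rfl⟩ := normalForm_surjective y₁
  obtain ⟨x₂, rfl⟩ := normalForm_surjective y₂
  rw [toModel_normalForm, toModel_normalForm] at h
  rw [h]

end WposPresentation

theorem WposOdd_conjClasses_general (m : ℕ) (hodd : Odd m) :
    Nat.card (ConjClasses (PresentedGroup (relsOddPos m))) = 2 * m + 3 := by
  have : NeZero m := ⟨hodd.pos.ne'⟩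
  rw [(MulEquiv.ofBijective _ WposPresentation.toModel_bijective).card_conjClasses_eq,
    WposModel.card_conjClasses hodd]

/-- For odd `m ≥ 3`, the positive double covering `Ŵ⁺` of `ℤ₂ × D_{2m}`
has exactly `2m + 3` conjugacy classes. -/
theorem WposOdd_conjClasses (m : ℕ) (hm : 3 ≤ m) (hodd : Odd m) :
    Nat.card (ConjClasses (PresentedGroup (relsOddPos m))) = 2 * m + 3 :=
  WposOdd_conjClasses_general m hodd
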